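/- Let p and q be primes with p > q > 3, let α₁, β₁ be nonzero elements of Z_p, and let α₂, β₂ be nonzero elements of Z_q. Suppose there exist an APS(p,α₁,β₁) and an APS(q,α₂,β₂). Then there exists a PPS(Z_{pq}, {0, q·α₁', −q·α₁', p·α₂', −p·α₂'}, {0, q·β₁', −q·β₁', p·β₂', −p·β₂'}), where α₁', β₁' are integer lifts of α₁, β₁ and α₂', β₂' are integer lifts of α₂, β₂, and q·α₁', q·β₁', p·α₂', p·β₂' are taken as elements of Z_{pq} (these are well defined modulo pq). -/

import Mathlib

open scoped Classical

/-- `IsPPS A₁ A₂ S`: `S` is a partial partitionable set for the subsets `A₁`, `A₂`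
of the abelian group `G`: the multiset of the four elements `x, -x, y, -y` over all
pairs `(x,y) ∈ S` covers each element of `G \ A₁` exactly once (and elements of `A₁`
zero times), and the multiset of the four elements `x+y, -(x+y), x-y, -(x-y)` covers
each element of `G \ A₂` exactly once (and elements of `A₂` zero times). -/
def IsPPS {G : Type*} [AddCommGroup G] (A₁ A₂ : Set G) (S : Finset (G × G)) : Prop :=
  (∀ z : G, (S.val.bind fun p => ({p.1, -p.1, p.2, -p.2} : Multiset G)).count z
      = if z ∈ A₁ then 0 else 1) ∧
  (∀ z : G, (S.val.bind fun p =>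
      ({p.1 + p.2, -(p.1 + p.2), p.1 - p.2, -(p.1 - p.2)} : Multiset G)).count z
      = if z ∈ A₂ then 0 else 1)

/-- An almost partitionable set `APS(v, α, β)`. -/
def IsAPS (v : ℕ) (α β : ZMod v) (S : Finset (ZMod v × ZMod v)) : Prop :=
  IsPPS ({0, α, -α} : Set (ZMod v)) ({0, β, -β} : Set (ZMod v)) S

/-- A partitionable set `PS(v)`. -/
def IsPS (v : ℕ) (S : Finset (ZMod v × ZMod v)) : Prop :=
  IsPPS ({0} : Set (ZMod v)) ({0} : Set (ZMod v)) S

/-!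
Identify `ℤ_{pq}` with `ℤ_p × ℤ_q`. The given APS of `ℤ_p`, rescaled by the unit `q`, covers the
axis `ℤ_p × 0` away from `0, ±(qα₁, 0)` (and `0, ±(qβ₁, 0)` for the sums), and symmetrically for
`0 × ℤ_q`. What is left is the set of units, the pairs with both coordinates nonzero.

Counting shows that an APS of `ℤ_v` forces `v ≡ 3 (mod 4)`, so the character
`χ(x, y) = (x/p)(y/q)` satisfies `χ(-1) = 1`. Let `X` contain one of `±x` for each unit `x` with
`χ x = 1`, and let `m` be a unit with `χ m = χ (1 - m²) = -1`. Then for the pairs `(x, m x)`,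
`x ∈ X`, the elements `±x, ±m x` run once over `ker χ` and over its other coset, and the sums and
differences `±(1 + m) x, ±(1 - m) x` do the same because `χ(1 + m) χ(1 - m) = -1`. Such an `m` is
found coordinatewise among `±2, ±1/2`, using `1 - (1/2)² = -(1/2)² (1 - 2²)`.
-/

open Function

section Transport

variable {α β : Type*} {t : α × α → Multiset α} {T : β × β → Multiset β}

def Intertwines (f : α → β) (t : α × α → Multiset α) (T : β × β → Multiset β) : Prop :=
  ∀ x, T (Prod.map f f x) = (t x).map f

theorem Multiset.bind_map_prodMap {f : α ↪ β} (hT : Intertwines f t T) (S : Finset (α × α)) :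
    (S.map (f.prodMap f)).val.bind T = (S.val.bind t).map f := by
  simp [Multiset.bind_map, Multiset.map_bind, hT _]

theorem Multiset.count_bind_map_prodMap_apply [DecidableEq α] [DecidableEq β] {f : α ↪ β}
    (hT : Intertwines f t T) (S : Finset (α × α)) (a : α) :
    ((S.map (f.prodMap f)).val.bind T).count (f a) = (S.val.bind t).count a := by
  rw [Multiset.bind_map_prodMap hT, Multiset.count_map_eq_count' _ _ f.injective]

theorem Multiset.count_bind_map_prodMap_of_notMem_range [DecidableEq β] {f : α ↪ β}
    (hT : Intertwines f t T) (S : Finset (α × α)) {b : β} (hb : b ∉ Set.range f) :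
    ((S.map (f.prodMap f)).val.bind T).count b = 0 := by
  rw [Multiset.bind_map_prodMap hT, Multiset.count_eq_zero, Multiset.mem_map]
  rintro ⟨a, -, rfl⟩
  exact hb ⟨a, rfl⟩

def CoversCompl [DecidableEq α] (t : α × α → Multiset α) (A : Set α) (S : Finset (α × α)) :
    Prop :=
  ∀ z, (S.val.bind t).count z = if z ∈ A then 0 else 1

theorem CoversCompl.image_equiv [DecidableEq α] [DecidableEq β] {e : α ≃ β}
    (hT : Intertwines e t T) {A : Set α} {S : Finset (α × α)} (h : CoversCompl t A S) :
    CoversCompl T (e '' A) (S.map (e.toEmbedding.prodMap e.toEmbedding)) := by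
  intro z
  rw [← e.apply_symm_apply z]
  refine (Multiset.count_bind_map_prodMap_apply (f := e.toEmbedding) hT S _).trans ?_
  simp only [e.injective.mem_set_image]
  exact h _

end Transport

section Prod

variable {α β : Type*}

variable (β) in
def inlPairs [Zero β] (S : Finset (α × α)) : Finset ((α × β) × (α × β)) :=
  S.map ((Embedding.sectL α (0 : β)).prodMap (Embedding.sectL α 0))

variable (α) in
def inrPairs [Zero α] (S : Finset (β × β)) : Finset ((α × β) × (α × β)) :=
  S.map ((Embedding.sectR (0 : α) β).prodMap (Embedding.sectR 0 β))

variable [DecidableEq α] [DecidableEq β] {tG : α × α → Multiset α} {tH : β × β → Multiset β}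
  {tK : (α × β) × (α × β) → Multiset (α × β)}
  {A₁ : Set α} {A₂ : Set β} {S₁ : Finset (α × α)} {S₂ : Finset (β × β)}

theorem CoversCompl.count_inlPairs [Zero β]
    (hG : Intertwines (Embedding.sectL α (0 : β)) tG tK) (h : CoversCompl tG A₁ S₁)
    (z : α × β) :
    ((inlPairs β S₁).val.bind tK).count z
      = if z.2 = 0 then (if z.1 ∈ A₁ then 0 else 1) else 0 := by
  obtain ⟨a, b⟩ := z
  by_cases hb : b = 0
  · subst hb
    rw [if_pos rfl]
    exact (Multiset.count_bind_map_prodMap_apply hG S₁ a).trans (h a)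
  · rw [if_neg hb]
    refine Multiset.count_bind_map_prodMap_of_notMem_range hG S₁ ?_
    rintro ⟨a, ha⟩
    exact hb (congrArg Prod.snd ha).symm

theorem CoversCompl.count_inrPairs [Zero α]
    (hH : Intertwines (Embedding.sectR (0 : α) β) tH tK) (h : CoversCompl tH A₂ S₂)
    (z : α × β) :
    ((inrPairs α S₂).val.bind tK).count z
      = if z.1 = 0 then (if z.2 ∈ A₂ then 0 else 1) else 0 := by
  obtain ⟨a, b⟩ := z
  by_cases ha : a = 0
  · subst ha
    rw [if_pos rfl]
    exact (Multiset.count_bind_map_prodMap_apply hH S₂ b).trans (h b)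
  · rw [if_neg ha]
    refine Multiset.count_bind_map_prodMap_of_notMem_range hH S₂ ?_
    rintro ⟨b, hb⟩
    exact ha (congrArg Prod.fst hb).symm

theorem CoversCompl.disjUnion_inlPairs_inrPairs [Zero α] [Zero β]
    (hG : Intertwines (Embedding.sectL α (0 : β)) tG tK)
    (hH : Intertwines (Embedding.sectR (0 : α) β) tH tK) {M : Finset ((α × β) × (α × β))}
    (h₁ : CoversCompl tG A₁ S₁) (h₂ : CoversCompl tH A₂ S₂)
    (hM : CoversCompl tK {z | z.1 = 0 ∨ z.2 = 0} M) (hA₁ : 0 ∈ A₁) (hA₂ : 0 ∈ A₂)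
    (hd₁ : Disjoint (inlPairs β S₁) (inrPairs α S₂))
    (hd₂ : Disjoint ((inlPairs β S₁).disjUnion (inrPairs α S₂) hd₁) M) :
    CoversCompl tK ((fun a => (a, 0)) '' A₁ ∪ (fun b => (0, b)) '' A₂)
      (((inlPairs β S₁).disjUnion (inrPairs α S₂) hd₁).disjUnion M hd₂) := by
  intro z
  simp only [Finset.disjUnion_val, Multiset.add_bind, Multiset.count_add,
    h₁.count_inlPairs hG, h₂.count_inrPairs hH, hM z]
  obtain ⟨a, b⟩ := z
  rcases eq_or_ne a 0 with rfl | ha <;> rcases eq_or_ne b 0 with rfl | hb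
  · simp [hA₁, hA₂]
  · simp [hb, hb.symm]
  · simp [ha, ha.symm]
  · simp [ha, hb, ha.symm, hb.symm]

end Prod

section AddCommGroup

variable {G H : Type*} [AddCommGroup G] [AddCommGroup H]

def pairElems (x : G × G) : Multiset G := {x.1, -x.1, x.2, -x.2}

def pairSums (x : G × G) : Multiset G := {x.1 + x.2, -(x.1 + x.2), x.1 - x.2, -(x.1 - x.2)}

theorem isPPS_iff [DecidableEq G] {A₁ A₂ : Set G} {S : Finset (G × G)} :
    IsPPS A₁ A₂ S ↔ CoversCompl pairElems A₁ S ∧ CoversCompl pairSums A₂ S := by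
  unfold IsPPS CoversCompl pairElems pairSums
  convert Iff.rfl

theorem intertwines_pairElems (f : G →+ H) : Intertwines f pairElems pairElems := by
  simp [Intertwines, pairElems]

theorem intertwines_pairSums (f : G →+ H) : Intertwines f pairSums pairSums := by
  simp [Intertwines, pairSums]

theorem IsPPS.fst_notMem {A₁ A₂ : Set G} {S : Finset (G × G)} (h : IsPPS A₁ A₂ S)
    {x : G × G} (hx : x ∈ S) : x.1 ∉ A₁ := by
  intro hA
  have hcount := h.1 x.1
  rw [if_pos hA, Multiset.count_eq_zero, Multiset.mem_bind] at hcount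
  exact hcount ⟨x, hx, by simp⟩

theorem IsPPS.four_mul_card_add_ncard [Finite G] {A₁ A₂ : Set G} {S : Finset (G × G)}
    (h : IsPPS A₁ A₂ S) : 4 * S.card + A₁.ncard = Nat.card G := by
  have := Fintype.ofFinite G
  have hcount : ∑ z, (S.val.bind pairElems).count z = 4 * S.card := by
    rw [Multiset.sum_count_eq_card (by simp), Multiset.card_bind]
    simp [pairElems, mul_comm]
  have hcompl : ∑ z : G, (if z ∈ A₁ then 0 else 1) = A₁ᶜ.ncard := by
    rw [Set.ncard_eq_toFinset_card']
    simp [Finset.sum_ite, Finset.filter_not, Finset.compl_eq_univ_sdiff,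
      Set.filter_mem_univ_eq_toFinset]
  rw [← hcount, Finset.sum_congr rfl fun z _ => (isPPS_iff.mp h).1 z, hcompl,
    add_comm, Set.ncard_add_ncard_compl]

theorem IsPPS.exists_image_addEquiv (e : G ≃+ H) {A₁ A₂ : Set G} {S : Finset (G × G)}
    (h : IsPPS A₁ A₂ S) : ∃ S', IsPPS (e '' A₁) (e '' A₂) S' :=
  ⟨_, isPPS_iff.mpr ⟨(isPPS_iff.mp h).1.image_equiv (intertwines_pairElems e.toAddMonoidHom),
    (isPPS_iff.mp h).2.image_equiv (intertwines_pairSums e.toAddMonoidHom)⟩⟩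

theorem IsPPS.exists_image_mul_left {R : Type*} [Ring R] {u : R} (hu : IsUnit u)
    {A₁ A₂ : Set R} {S : Finset (R × R)} (h : IsPPS A₁ A₂ S) :
    ∃ S', IsPPS ((u * ·) '' A₁) ((u * ·) '' A₂) S' := by
  have he : ⇑(DistribMulAction.toAddEquiv R hu.unit) = (u * ·) := by
    ext x
    simp [Units.smul_def]
  simpa only [he] using h.exists_image_addEquiv (DistribMulAction.toAddEquiv R hu.unit)

theorem IsPPS.exists_prod {A₁ B₁ : Set G} {A₂ B₂ : Set H} {S₁ : Finset (G × G)}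
    {S₂ : Finset (H × H)} {M : Finset ((G × H) × (G × H))} (h₁ : IsPPS A₁ B₁ S₁)
    (h₂ : IsPPS A₂ B₂ S₂) (hM : IsPPS {z | z.1 = 0 ∨ z.2 = 0} {z | z.1 = 0 ∨ z.2 = 0} M)
    (hA₁ : 0 ∈ A₁) (hB₁ : 0 ∈ B₁) (hA₂ : 0 ∈ A₂) (hB₂ : 0 ∈ B₂) :
    ∃ S, IsPPS ((fun a => (a, 0)) '' A₁ ∪ (fun b => (0, b)) '' A₂)
      ((fun a => (a, 0)) '' B₁ ∪ (fun b => (0, b)) '' B₂) S := by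
  have hd₁ : Disjoint (inlPairs H S₁) (inrPairs G S₂) := by
    simp only [Finset.disjoint_left, inlPairs, inrPairs, Finset.mem_map]
    rintro _ ⟨x, hx, rfl⟩ ⟨y, -, hxy⟩
    have hx0 : 0 = x.1 := congrArg (fun p => p.1.1) hxy
    exact h₁.fst_notMem hx (hx0 ▸ hA₁)
  have hd₂ : Disjoint ((inlPairs H S₁).disjUnion (inrPairs G S₂) hd₁) M := by
    simp only [Finset.disjoint_left, Finset.mem_disjUnion, inlPairs, inrPairs, Finset.mem_map]
    rintro _ (⟨x, -, rfl⟩ | ⟨x, -, rfl⟩) hM' <;> exact hM.fst_notMem hM' (by simp)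
  obtain ⟨hE₁, hS₁⟩ := isPPS_iff.mp h₁
  obtain ⟨hE₂, hS₂⟩ := isPPS_iff.mp h₂
  obtain ⟨hEM, hSM⟩ := isPPS_iff.mp hM
  exact ⟨_, isPPS_iff.mpr
    ⟨hE₁.disjUnion_inlPairs_inrPairs (intertwines_pairElems (.inl G H))
      (intertwines_pairElems (.inr G H)) hE₂ hEM hA₁ hA₂ hd₁ hd₂,
    hS₁.disjUnion_inlPairs_inrPairs (intertwines_pairSums (.inl G H))
      (intertwines_pairSums (.inr G H)) hS₂ hSM hB₁ hB₂ hd₁ hd₂⟩⟩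

end AddCommGroup

theorem IsAPS.mod_four_eq_three {v : ℕ} {α β : ZMod v} {S : Finset (ZMod v × ZMod v)}
    (hv : Odd v) (hα : α ≠ 0) (h : IsAPS v α β S) : v % 4 = 3 := by
  have : NeZero v := ⟨hv.pos.ne'⟩
  have hα' : α ≠ -α := fun h' => by
    rcases (ZMod.neg_eq_self_iff α).mp h'.symm with h0 | h2
    · exact hα h0
    · exact Nat.not_even_iff_odd.mpr hv ⟨α.val, by omega⟩
  have h3 : ({0, α, -α} : Set (ZMod v)).ncard = 3 := by
    rw [Set.ncard_insert_of_notMem (by simp [hα, hα.symm]), Set.ncard_pair hα']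
  have := h.four_mul_card_add_ncard
  rw [h3, Nat.card_zmod] at this
  omega

theorem Finset.exists_count_bind_neg_eq_ite {R : Type*} [InvolutiveNeg R] [Fintype R]
    [DecidableEq R] (P : R → Prop) [DecidablePred P] (hneg : ∀ z, P (-z) ↔ P z)
    (hfix : ∀ z, P z → -z ≠ z) :
    ∃ X : Finset R, ∀ z, (X.val.bind fun x => {x, -x}).count z = if P z then 1 else 0 := by
  -- of each pair `{x, -x}` keep the element listed first in an enumeration of `R`
  let e := Fintype.equivFin R
  refine ⟨univ.filter fun x => P x ∧ e x < e (-x), fun z => ?_⟩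
  have hsplit : ∀ s : Multiset R, (s.bind fun x => {x, -x}) = s + s.map Neg.neg := by
    intro s
    simp only [Multiset.insert_eq_cons, ← Multiset.singleton_add, Multiset.bind_add]
    rw [Multiset.bind_singleton, Multiset.bind_singleton, Multiset.map_id']
  rw [hsplit, Multiset.count_add, ← neg_neg z,
    Multiset.count_map_eq_count' _ _ neg_injective, neg_neg,
    Multiset.count_eq_of_nodup (Finset.nodup _), Multiset.count_eq_of_nodup (Finset.nodup _)]
  simp only [Finset.mem_val, Finset.mem_filter, Finset.mem_univ, true_and, hneg, neg_neg]
  by_cases hz : P z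
  · have hne : e z ≠ e (-z) := fun h => hfix z hz (e.injective h).symm
    rcases hne.lt_or_gt with h | h <;> simp [hz, h, h.not_gt]
  · simp [hz]

section MulPairs

variable {R : Type*} [CommRing R]

def mulPairs (m : R) (X : Finset R) : Finset (R × R) :=
  X.map ⟨fun x => (x, m * x), fun _ _ h => congrArg Prod.fst h⟩

theorem bind_pairElems_mulPairs (m : R) (X : Finset R) :
    (mulPairs m X).val.bind pairElems
      = (X.val.bind fun x => {1 * x, -(1 * x)}) + X.val.bind fun x => {m * x, -(m * x)} := by
  rw [mulPairs, Finset.map_val, Multiset.bind_map, ← Multiset.bind_add]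
  refine congrArg _ (funext fun x => ?_)
  simp only [pairElems, one_mul, Multiset.insert_eq_cons, Multiset.cons_add,
    Multiset.singleton_add]
  rfl

theorem bind_pairSums_mulPairs (m : R) (X : Finset R) :
    (mulPairs m X).val.bind pairSums
      = (X.val.bind fun x => {(1 + m) * x, -((1 + m) * x)}) +
          X.val.bind fun x => {(1 - m) * x, -((1 - m) * x)} := by
  rw [mulPairs, Finset.map_val, Multiset.bind_map, ← Multiset.bind_add]
  refine congrArg _ (funext fun x => ?_)
  simp only [pairSums, add_mul, sub_mul, one_mul, Multiset.insert_eq_cons, Multiset.cons_add,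
    Multiset.singleton_add]
  rfl

end MulPairs

namespace MulChar

section Prod

variable {R S R' : Type*} [CommMonoid R] [CommMonoid S] [CommMonoidWithZero R']

def prod (χ : MulChar R R') (ψ : MulChar S R') : MulChar (R × S) R' where
  toFun z := χ z.1 * ψ z.2
  map_one' := by simp
  map_mul' a b := by simp [mul_mul_mul_comm]
  map_nonunit' z hz := by
    rcases not_and_or.mp (Prod.isUnit_iff.not.mp hz) with h | h <;> simp [map_nonunit _ h]

@[simp]
theorem prod_apply (χ : MulChar R R') (ψ : MulChar S R') (z : R × S) :
    χ.prod ψ z = χ z.1 * ψ z.2 :=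
  rfl

end Prod

variable {R : Type*} [CommRing R] (χ : MulChar R ℤ)

theorem eq_one_or_eq_neg_one {a : R} (ha : IsUnit a) : χ a = 1 ∨ χ a = -1 :=
  Int.isUnit_iff.mp (ha.map χ)

theorem isUnit_of_ne_zero {a : R} (ha : χ a ≠ 0) : IsUnit a :=
  not_not.mp (mt χ.map_nonunit ha)

theorem two_ne_zero_of_apply_one_sub_sq {m : R} (hm : χ (1 - m ^ 2) = -1) : (2 : R) ≠ 0 := by
  intro h2
  have hsq : χ (1 - m ^ 2) = χ (1 - m) ^ 2 := by
    rw [← map_pow]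
    congr 1
    linear_combination (m - m ^ 2) * h2
  nlinarith [sq_nonneg (χ (1 - m))]

theorem ite_add_ite_eq_ite_isUnit {a b : ℤ} (hab : a * b = -1) (z : R) :
    ((if χ z = a then 1 else 0) + if χ z = b then 1 else 0) = if ¬IsUnit z then 0 else 1 := by
  by_cases hz : IsUnit z
  · rcases Int.eq_one_or_neg_one_of_mul_eq_neg_one' hab with ⟨rfl, rfl⟩ | ⟨rfl, rfl⟩ <;>
      rcases χ.eq_one_or_eq_neg_one hz with h | h <;> simp [h, hz]
  · have ha : a ≠ 0 := left_ne_zero_of_mul (by omega : a * b ≠ 0)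
    have hb : b ≠ 0 := right_ne_zero_of_mul (by omega : a * b ≠ 0)
    simp [hz, ha.symm, hb.symm]

variable [DecidableEq R] {χ}

theorem count_bind_mul_eq_ite {X : Finset R}
    (hX : ∀ z, (X.val.bind fun x => {x, -x}).count z = if χ z = 1 then 1 else 0)
    {u : R} (hu : IsUnit u) (z : R) :
    (X.val.bind fun x => {u * x, -(u * x)}).count z = if χ z = χ u then 1 else 0 := by
  obtain ⟨u, rfl⟩ := hu
  have hmap : (X.val.bind fun x => {↑u * x, -(↑u * x)}) =
      (X.val.bind fun x => {x, -x}).map ((u : R) * ·) := by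
    simp
  rw [hmap, ← u.mul_inv_cancel_left z,
    Multiset.count_map_eq_count' _ _ u.isUnit.mul_right_injective, hX, u.mul_inv_cancel_left,
    map_mul]
  have hprod : χ ↑u⁻¹ * χ u = 1 := by rw [← map_mul, u.inv_mul, map_one]
  rcases χ.eq_one_or_eq_neg_one u.isUnit with h | h <;> rw [h] at hprod ⊢
  · rw [mul_one] at hprod
    simp [hprod]
  · rw [show χ ↑u⁻¹ = -1 by omega]
    simp [neg_eq_iff_eq_neg]

theorem exists_isPPS_nonunits [Fintype R] (hχ : χ (-1) = 1) {m : R} (hm : χ m = -1)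
    (hm' : χ (1 - m ^ 2) = -1) : ∃ M, IsPPS {z : R | ¬IsUnit z} {z | ¬IsUnit z} M := by
  have hsq : IsUnit ((1 + m) * (1 - m)) :=
    χ.isUnit_of_ne_zero (by rw [show (1 + m) * (1 - m) = 1 - m ^ 2 by ring, hm']; norm_num)
  have hfix : ∀ z, χ z = 1 → -z ≠ z := fun z hz hzz =>
    χ.two_ne_zero_of_apply_one_sub_sq hm'
      ((χ.isUnit_of_ne_zero (by rw [hz]; norm_num)).mul_left_eq_zero.mp
        (by linear_combination -hzz))
  obtain ⟨X, hX⟩ := Finset.exists_count_bind_neg_eq_ite (fun z => χ z = 1)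
    (fun z => by rw [neg_eq_neg_one_mul, map_mul, hχ, one_mul]) hfix
  refine ⟨mulPairs m X, isPPS_iff.mpr ⟨fun z => ?_, fun z => ?_⟩⟩
  · rw [bind_pairElems_mulPairs, Multiset.count_add, count_bind_mul_eq_ite hX isUnit_one,
      count_bind_mul_eq_ite hX (χ.isUnit_of_ne_zero (by rw [hm]; norm_num)), map_one, hm]
    convert χ.ite_add_ite_eq_ite_isUnit (a := 1) (b := -1) (by norm_num) z using 2
    exact Iff.rfl
  · rw [bind_pairSums_mulPairs, Multiset.count_add,
      count_bind_mul_eq_ite hX (isUnit_of_mul_isUnit_left hsq),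
      count_bind_mul_eq_ite hX (isUnit_of_mul_isUnit_right hsq)]
    convert χ.ite_add_ite_eq_ite_isUnit
      (by rw [← map_mul χ, show (1 + m) * (1 - m) = 1 - m ^ 2 by ring, hm']) z using 2
    exact Iff.rfl

end MulChar

namespace ZMod

theorem natCast_ne_zero_of_pos_of_lt {n v : ℕ} (h0 : 0 < n) (hn : n < v) :
    (n : ZMod v) ≠ 0 := by
  rw [Ne, natCast_eq_zero_iff]
  exact Nat.not_dvd_of_pos_of_lt h0 hn

section QuadraticChar

variable {v : ℕ} [Fact v.Prime]

theorem quadraticChar_neg (hv : v % 4 = 3) (a : ZMod v) :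
    quadraticChar (ZMod v) (-a) = -quadraticChar (ZMod v) a := by
  have hchar : ringChar (ZMod v) ≠ 2 := by rw [ZMod.ringChar_zmod_n]; omega
  rw [neg_eq_neg_one_mul, map_mul, quadraticChar_neg_one hchar, ZMod.card,
    ZMod.χ₄_nat_three_mod_four hv, neg_one_mul]

theorem exists_quadraticChar_one_sub_sq_eq (hv : v % 4 = 3) (hv3 : 3 < v) (δ : ℤˣ) :
    ∃ l : ZMod v, l ≠ 0 ∧ quadraticChar (ZMod v) (1 - l ^ 2) = δ := by
  have h2 : (2 : ZMod v) ≠ 0 := by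
    exact_mod_cast natCast_ne_zero_of_pos_of_lt (n := 2) two_pos (by omega)
  have h3 : (1 - 2 ^ 2 : ZMod v) ≠ 0 := by
    rw [show (1 - 2 ^ 2 : ZMod v) = -((3 : ℕ) : ZMod v) by push_cast; ring, neg_ne_zero]
    exact natCast_ne_zero_of_pos_of_lt three_pos hv3
  have hflip : quadraticChar (ZMod v) (1 - 2⁻¹ ^ 2) = -quadraticChar (ZMod v) (1 - 2 ^ 2) := by
    rw [show (1 - 2⁻¹ ^ 2 : ZMod v) = -(2⁻¹ ^ 2 * (1 - 2 ^ 2)) by field_simp; ring,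
      quadraticChar_neg hv, map_mul, quadraticChar_sq_one' (inv_ne_zero h2), one_mul]
  rcases quadraticChar_dichotomy h3 with h | h <;> rcases Int.units_eq_one_or δ with rfl | rfl
  · exact ⟨2, h2, by rw [h]; simp⟩
  · exact ⟨2⁻¹, inv_ne_zero h2, by rw [hflip, h]; simp⟩
  · exact ⟨2⁻¹, inv_ne_zero h2, by rw [hflip, h]; simp⟩
  · exact ⟨2, h2, by rw [h]; simp⟩

theorem exists_quadraticChar_eq_and (hv : v % 4 = 3) (hv3 : 3 < v) (ε δ : ℤˣ) :
    ∃ l : ZMod v, quadraticChar (ZMod v) l = ε ∧ quadraticChar (ZMod v) (1 - l ^ 2) = δ := by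
  obtain ⟨l, hl, hδ⟩ := exists_quadraticChar_one_sub_sq_eq hv hv3 δ
  rcases quadraticChar_dichotomy hl with h | h <;> rcases Int.units_eq_one_or ε with rfl | rfl
  · exact ⟨l, by simp [h], hδ⟩
  · exact ⟨-l, by simp [quadraticChar_neg hv, h], by rwa [neg_sq]⟩
  · exact ⟨-l, by simp [quadraticChar_neg hv, h], by rwa [neg_sq]⟩
  · exact ⟨l, by simp [h], hδ⟩

end QuadraticChar

theorem exists_isPPS_prod_axes {p q : ℕ} [Fact p.Prime] [Fact q.Prime] (hp : p % 4 = 3)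
    (hq : q % 4 = 3) (hp3 : 3 < p) (hq3 : 3 < q) :
    ∃ M, IsPPS {z : ZMod p × ZMod q | z.1 = 0 ∨ z.2 = 0} {z | z.1 = 0 ∨ z.2 = 0} M := by
  obtain ⟨l₁, hl₁, hl₁'⟩ := exists_quadraticChar_eq_and hp hp3 1 (-1)
  obtain ⟨l₂, hl₂, hl₂'⟩ := exists_quadraticChar_eq_and hq hq3 (-1) 1
  have hnonunit : {z : ZMod p × ZMod q | ¬IsUnit z} = {z | z.1 = 0 ∨ z.2 = 0} := by
    ext z
    simp [Prod.isUnit_iff, or_iff_not_imp_left]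
  rw [← hnonunit]
  refine ((quadraticChar (ZMod p)).prod (quadraticChar (ZMod q))).exists_isPPS_nonunits
    (m := (l₁, l₂)) ?_ ?_ ?_
  · simp [quadraticChar_neg hp, quadraticChar_neg hq]
  · simp [hl₁, hl₂]
  · simp [hl₁', hl₂']

theorem chineseRemainder_symm_image {p q : ℕ} [NeZero p] [NeZero q] (hcop : p.Coprime q)
    (a : ZMod p) (b : ZMod q) :
    (chineseRemainder hcop).symm ''
        ((fun x => (x, 0)) '' ((q * ·) '' {0, a, -a}) ∪
          (fun y => (0, y)) '' ((p * ·) '' {0, b, -b}))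
      = {0, (q : ZMod (p * q)) * (a.val : ZMod (p * q)),
          -((q : ZMod (p * q)) * (a.val : ZMod (p * q))),
          (p : ZMod (p * q)) * (b.val : ZMod (p * q)),
          -((p : ZMod (p * q)) * (b.val : ZMod (p * q)))} := by
  have ha : (chineseRemainder hcop).symm ((q : ZMod p) * a, 0) = q * a.val := by
    rw [RingEquiv.symm_apply_eq, map_mul, map_natCast, map_natCast]
    ext <;> simp
  have hb : (chineseRemainder hcop).symm (0, (p : ZMod q) * b) = p * b.val := by
    rw [RingEquiv.symm_apply_eq, map_mul, map_natCast, map_natCast]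
    ext <;> simp
  have hna : (chineseRemainder hcop).symm (-((q : ZMod p) * a), 0) = -(q * a.val) := by
    rw [← ha, ← map_neg, Prod.neg_mk, neg_zero]
  have hnb : (chineseRemainder hcop).symm (0, -((p : ZMod q) * b)) = -(p * b.val) := by
    rw [← hb, ← map_neg, Prod.neg_mk, neg_zero]
  simp only [Set.image_union, Set.image_insert_eq, Set.image_singleton, mul_zero, mul_neg, ha,
    hb, hna, hnb, Prod.mk_zero_zero, map_zero]
  ext z
  simp only [Set.mem_union, Set.mem_insert_iff, Set.mem_singleton_iff]
  tauto

end ZMod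

theorem stmt15_general (p q : ℕ) (hp : Nat.Prime p) (hq : Nat.Prime q)
    (hq3 : 3 < q) (hqp : q < p)
    (α₁ β₁ : ZMod p) (hα₁ : α₁ ≠ 0)
    (α₂ β₂ : ZMod q) (hα₂ : α₂ ≠ 0)
    (h1 : ∃ S : Finset (ZMod p × ZMod p), IsAPS p α₁ β₁ S)
    (h2 : ∃ S : Finset (ZMod q × ZMod q), IsAPS q α₂ β₂ S) :
    ∃ S : Finset (ZMod (p * q) × ZMod (p * q)),
      IsPPS ({0, (q : ZMod (p * q)) * (α₁.val : ZMod (p * q)),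
              -((q : ZMod (p * q)) * (α₁.val : ZMod (p * q))),
              (p : ZMod (p * q)) * (α₂.val : ZMod (p * q)),
              -((p : ZMod (p * q)) * (α₂.val : ZMod (p * q)))} : Set (ZMod (p * q)))
            ({0, (q : ZMod (p * q)) * (β₁.val : ZMod (p * q)),
              -((q : ZMod (p * q)) * (β₁.val : ZMod (p * q))),
              (p : ZMod (p * q)) * (β₂.val : ZMod (p * q)),
              -((p : ZMod (p * q)) * (β₂.val : ZMod (p * q)))} : Set (ZMod (p * q))) S := by
  have := Fact.mk hp
  have := Fact.mk hq
  obtain ⟨S₁, hS₁⟩ := h1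
  obtain ⟨S₂, hS₂⟩ := h2
  have hp4 := hS₁.mod_four_eq_three (hp.odd_of_ne_two (by omega)) hα₁
  have hq4 := hS₂.mod_four_eq_three (hq.odd_of_ne_two (by omega)) hα₂
  obtain ⟨M, hM⟩ := ZMod.exists_isPPS_prod_axes hp4 hq4 (by omega) hq3
  have hq0 : (q : ZMod p) ≠ 0 := ZMod.natCast_ne_zero_of_pos_of_lt hq.pos hqp
  have hp0 : (p : ZMod q) ≠ 0 := by
    rw [Ne, ZMod.natCast_eq_zero_iff]
    exact fun h => (hp.eq_one_or_self_of_dvd q h).elim (by omega) (by omega)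
  obtain ⟨T₁, hT₁⟩ := hS₁.exists_image_mul_left (Ne.isUnit hq0)
  obtain ⟨T₂, hT₂⟩ := hS₂.exists_image_mul_left (Ne.isUnit hp0)
  obtain ⟨T, hT⟩ := hT₁.exists_prod hT₂ hM (by simp) (by simp) (by simp) (by simp)
  have hcop : p.Coprime q := (Nat.coprime_primes hp hq).mpr (by omega)
  obtain ⟨S, hS⟩ := hT.exists_image_addEquiv (ZMod.chineseRemainder hcop).symm.toAddEquiv
  simp only [RingEquiv.toAddEquiv_eq_coe, RingEquiv.coe_toAddEquiv,
    ZMod.chineseRemainder_symm_image] at hS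
  exact ⟨S, hS⟩

theorem stmt15 (p q : ℕ) (hp : Nat.Prime p) (hq : Nat.Prime q)
    (hq3 : 3 < q) (hqp : q < p)
    (α₁ β₁ : ZMod p) (hα₁ : α₁ ≠ 0) (hβ₁ : β₁ ≠ 0)
    (α₂ β₂ : ZMod q) (hα₂ : α₂ ≠ 0) (hβ₂ : β₂ ≠ 0)
    (h1 : ∃ S : Finset (ZMod p × ZMod p), IsAPS p α₁ β₁ S)
    (h2 : ∃ S : Finset (ZMod q × ZMod q), IsAPS q α₂ β₂ S) :
    ∃ S : Finset (ZMod (p * q) × ZMod (p * q)),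
      IsPPS ({0, (q : ZMod (p * q)) * (α₁.val : ZMod (p * q)),
              -((q : ZMod (p * q)) * (α₁.val : ZMod (p * q))),
              (p : ZMod (p * q)) * (α₂.val : ZMod (p * q)),
              -((p : ZMod (p * q)) * (α₂.val : ZMod (p * q)))} : Set (ZMod (p * q)))
            ({0, (q : ZMod (p * q)) * (β₁.val : ZMod (p * q)),
              -((q : ZMod (p * q)) * (β₁.val : ZMod (p * q))),
              (p : ZMod (p * q)) * (β₂.val : ZMod (p * q)),
              -((p : ZMod (p * q)) * (β₂.val : ZMod (p * q)))} : Set (ZMod (p * q))) S :=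
  stmt15_general p q hp hq hq3 hqp α₁ β₁ hα₁ α₂ β₂ hα₂ h1 h2
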